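/- arXiv:0902.3883 — 3 statements merged into one kernel-verified Lean document; each statement's English description precedes it below -/
import Mathlib

section
/- Let Γ be the adjacency matrix (with entries in {0,1} ⊆ GF(4)) of a simple directed graph on n vertices, and let C = Γ + ωI. Let 𝒞 be the additive span over GF(2) of the rows of C, and let 𝒟 be the additive span over GF(2) of the rows of Cᵀ. Then 𝒟 ⊆ 𝒞^⊥, where the dual is taken with respect to the Hermitian trace inner product u * v = Σᵢ(uᵢvᵢ² + uᵢ²vᵢ). -/
abbrev F4 := GaloisField 2 2
noncomputable instance : Fintype F4 := Fintype.ofFinite F4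
noncomputable instance : DecidableEq F4 := Classical.decEq F4

/-- The Hermitian trace inner product. -/
noncomputable def trip {ι : Type} [Fintype ι] (u v : ι → F4) : F4 :=
  ∑ i, (u i * (v i) ^ 2 + (u i) ^ 2 * v i)

lemma F4_two : (2 : F4) = 0 := by
  have : CharP F4 2 := inferInstance
  exact CharP.cast_eq_zero F4 2

lemma F4_sq_of_bin {x : F4} (h : x = 0 ∨ x = 1) : x ^ 2 = x := by
  rcases h with h | h <;> simp [h]

lemma F4_poly (g h d1 d2 ω : F4) (hg : g ^ 2 = g) (hh : h ^ 2 = h)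
    (hd1 : d1 ^ 2 = d1) (hd2 : d2 ^ 2 = d2) (hω : ω ^ 2 = ω + 1) :
    (g + ω * d1) * (h + ω * d2) ^ 2 + (g + ω * d1) ^ 2 * (h + ω * d2)
      = g * d2 + h * d1 := by
  have h2 : (2 : F4) = 0 := F4_two
  linear_combination (h + ω*d2)*hg + (g + ω*d1)*hh + ((ω+1)*h + d2)*hd1
    + ((ω+1)*g + d1)*hd2 + (g*d2^2 + h*d1^2 + (ω+1)*(d1*d2^2 + d1^2*d2))*hω
    + (g*h + ω*g*h*d2 + ω*g*h*d1 + ω*g*d2 + ω*h*d1 + ω*(d1*d2^2 + d1^2*d2) + d1*d2 + g*ω^2*d1*d2 + ω^2*h*d1*d2)*h2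

lemma F4_sq_sum {n : ℕ} (f : Fin n → F4) : (∑ i, f i) ^ 2 = ∑ i, (f i) ^ 2 := by
  have h := map_sum (frobenius F4 2) f Finset.univ
  simp only [frobenius_def] at h
  exact h

theorem transpose_span_subset_dual {n : ℕ} (Γ : Matrix (Fin n) (Fin n) F4)
    (hbin : ∀ i j, Γ i j = 0 ∨ Γ i j = 1) (hdiag : ∀ i, Γ i i = 0)
    (ω : F4) (hω : ω ^ 2 = ω + 1) (C : Matrix (Fin n) (Fin n) F4)
    (hC : C = Γ + ω • 1) :
    ∀ x ∈ {x | ∃ b : Fin n → F4, (∀ i, b i = 0 ∨ b i = 1) ∧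
        x = Matrix.vecMul b C.transpose},
      x ∈ {u : Fin n → F4 |
        ∀ c ∈ {c | ∃ a : Fin n → F4, (∀ i, a i = 0 ∨ a i = 1) ∧
          c = Matrix.vecMul a C}, trip u c = 0} := by
  rintro x ⟨b, hb, rfl⟩ c ⟨a, ha, rfl⟩
  have hCd : ∀ i j, C i j = Γ i j + ω * (if i = j then 1 else 0) := by
    intro i j
    simp [hC, Matrix.add_apply, Matrix.smul_apply, Matrix.one_apply, mul_ite]
  -- key pointwise identity
  have key : ∀ i j k : Fin n,
      C i j * (C k i) ^ 2 + (C i j) ^ 2 * C k i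
        = Γ i j * (if k = i then 1 else 0) + Γ k i * (if i = j then 1 else 0) := by
    intro i j k
    rw [hCd i j, hCd k i]
    exact F4_poly _ _ _ _ _ (F4_sq_of_bin (hbin i j)) (F4_sq_of_bin (hbin k i))
      (by split_ifs <;> simp) (by split_ifs <;> simp) hω
  -- inner sum is zero
  have inner : ∀ j k : Fin n,
      (∑ i, (C i j * (C k i) ^ 2 + (C i j) ^ 2 * C k i)) = 0 := by
    intro j k
    have : (∑ i, (C i j * (C k i) ^ 2 + (C i j) ^ 2 * C k i))
        = ∑ i, (Γ i j * (if k = i then 1 else 0) + Γ k i * (if i = j then 1 else 0)) := by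
      exact Finset.sum_congr rfl fun i _ => key i j k
    rw [this, Finset.sum_add_distrib]
    simp only [mul_ite, mul_one, mul_zero]
    rw [Finset.sum_ite_eq, Finset.sum_ite_eq']
    simp only [Finset.mem_univ, if_true]
    linear_combination Γ k j * F4_two
  -- compute the entries
  have hx : ∀ i, Matrix.vecMul b C.transpose i = ∑ j, b j * C i j := by
    intro i
    simp [Matrix.vecMul, dotProduct, Matrix.transpose_apply]
  have hc : ∀ i, Matrix.vecMul a C i = ∑ k, a k * C k i := by
    intro i
    simp [Matrix.vecMul, dotProduct]
  unfold trip
  have step : ∀ i : Fin n,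
      Matrix.vecMul b C.transpose i * (Matrix.vecMul a C i) ^ 2
        + (Matrix.vecMul b C.transpose i) ^ 2 * Matrix.vecMul a C i
      = ∑ j, ∑ k, b j * a k * (C i j * (C k i) ^ 2 + (C i j) ^ 2 * C k i) := by
    intro i
    rw [hx, hc]
    have e1 : (∑ k, a k * C k i) ^ 2 = ∑ k, a k * (C k i) ^ 2 := by
      rw [F4_sq_sum]
      exact Finset.sum_congr rfl fun k _ => by
        rw [mul_pow, F4_sq_of_bin (ha k)]
    have e2 : (∑ j, b j * C i j) ^ 2 = ∑ j, b j * (C i j) ^ 2 := by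
      rw [F4_sq_sum]
      exact Finset.sum_congr rfl fun j _ => by
        rw [mul_pow, F4_sq_of_bin (hb j)]
    rw [e1, e2, Finset.sum_mul_sum, Finset.sum_mul_sum, ← Finset.sum_add_distrib]
    refine Finset.sum_congr rfl fun j _ => ?_
    rw [← Finset.sum_add_distrib]
    exact Finset.sum_congr rfl fun k _ => by ring
  rw [Finset.sum_congr rfl fun i _ => step i]
  rw [Finset.sum_comm]
  refine Finset.sum_eq_zero fun j _ => ?_
  rw [Finset.sum_comm]
  refine Finset.sum_eq_zero fun k _ => ?_
  rw [← Finset.mul_sum, inner j k, mul_zero]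
end

section
/- Let Γ be the adjacency matrix of a simple directed graph on n vertices, viewed over GF(4), and C = Γ + ωI. If a ∈ GF(2)ⁿ and b ∈ GF(2)ⁿ, then the Hermitian trace inner product (aC) * (bCᵀ) = 0. -/
theorem trip_row_col_zero {n : ℕ} (Γ : Matrix (Fin n) (Fin n) F4)
    (hbin : ∀ i j, Γ i j = 0 ∨ Γ i j = 1) (hdiag : ∀ i, Γ i i = 0)
    (ω : F4) (hω : ω ^ 2 = ω + 1) (C : Matrix (Fin n) (Fin n) F4)
    (hC : C = Γ + ω • 1)
    (a b : Fin n → F4) (ha : ∀ i, a i = 0 ∨ a i = 1)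
    (hb : ∀ i, b i = 0 ∨ b i = 1) :
    trip (Matrix.vecMul a C) (Matrix.vecMul b C.transpose) = 0 := by
  haveI : CharP F4 2 := inferInstance
  have hsq : ∀ x : F4, (x = 0 ∨ x = 1) → x ^ 2 = x := by
    rintro x (rfl | rfl) <;> norm_num
  set D : Matrix (Fin n) (Fin n) F4 := Γ + (ω ^ 2) • 1 with hD
  have hCD : ∀ k i, (C k i) ^ 2 = D k i := by
    intro k i
    rcases eq_or_ne k i with rfl | h
    · simp only [hC, hD, Matrix.add_apply, Matrix.smul_apply, Matrix.one_apply_eq, smul_eq_mul,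
        mul_one, hdiag k, zero_add]
    · simp only [hC, hD, Matrix.add_apply, Matrix.smul_apply, Matrix.one_apply_ne h, smul_eq_mul,
        mul_zero, add_zero, hsq _ (hbin k i)]
  have comm : C * D = D * C := by
    rw [hC, hD]
    simp only [Matrix.add_mul, Matrix.mul_add, Matrix.smul_mul, Matrix.mul_smul,
      Matrix.one_mul, Matrix.mul_one, smul_add, smul_smul, mul_comm ω (ω ^ 2)]
    abel
  have comm' : ∀ k l, (∑ i, C k i * D i l) = ∑ i, D k i * C i l := by
    intro k l
    have := congrFun (congrFun comm k) l
    simpa [Matrix.mul_apply] using this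
  have e1 : ∀ i : Fin n, (∑ l, b l * C i l) ^ 2 = ∑ l, b l * D i l := by
    intro i
    rw [CharTwo.sum_sq]
    exact Finset.sum_congr rfl fun l _ => by rw [mul_pow, hsq _ (hb l), hCD]
  have e2 : ∀ i : Fin n, (∑ k, a k * C k i) ^ 2 = ∑ k, a k * D k i := by
    intro i
    rw [CharTwo.sum_sq]
    exact Finset.sum_congr rfl fun k _ => by rw [mul_pow, hsq _ (ha k), hCD]
  have swap : ∀ f : Fin n → Fin n → Fin n → F4,
      (∑ i, ∑ k, ∑ l, f i k l) = ∑ k, ∑ l, ∑ i, f i k l := by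
    intro f
    rw [Finset.sum_comm]
    exact Finset.sum_congr rfl fun k _ => Finset.sum_comm ..
  have key : trip (Matrix.vecMul a C) (Matrix.vecMul b C.transpose)
      = ∑ k, ∑ l, a k * b l * ((∑ i, C k i * D i l) + (∑ i, D k i * C i l)) := by
    unfold trip
    simp only [Matrix.vecMul, dotProduct, Matrix.transpose_apply]
    calc ∑ i, ((∑ k, a k * C k i) * (∑ l, b l * C i l) ^ 2 +
          (∑ k, a k * C k i) ^ 2 * (∑ l, b l * C i l))
        = ∑ i, ∑ k, ∑ l, (a k * b l * (C k i * D i l) + a k * b l * (D k i * C i l)) := by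
          refine Finset.sum_congr rfl fun i _ => ?_
          rw [e1, e2, Finset.sum_mul_sum, Finset.sum_mul_sum, ← Finset.sum_add_distrib]
          refine Finset.sum_congr rfl fun k _ => ?_
          rw [← Finset.sum_add_distrib]
          exact Finset.sum_congr rfl fun l _ => by ring
      _ = ∑ k, ∑ l, ∑ i, (a k * b l * (C k i * D i l) + a k * b l * (D k i * C i l)) := swap _
      _ = ∑ k, ∑ l, a k * b l * ((∑ i, C k i * D i l) + (∑ i, D k i * C i l)) := by
          refine Finset.sum_congr rfl fun k _ => Finset.sum_congr rfl fun l _ => ?_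
          rw [Finset.sum_add_distrib, ← Finset.mul_sum, ← Finset.mul_sum, ← mul_add]
  rw [key]
  apply Finset.sum_eq_zero; intro k _
  apply Finset.sum_eq_zero; intro l _
  rw [comm' k l, CharTwo.add_self_eq_zero, mul_zero]
end

section
/- A directed graph code with generator matrix C = Γ + ωI is self-dual with respect to the Hermitian trace inner product if and only if Γ is symmetric (i.e., the graph is undirected). -/
/-!
Write `Tr x = x + x²` for the trace of GF(4) over GF(2), so that `u * v = ∑ᵢ Tr (uᵢ vᵢ²)`, and
let `M = Γ + ωI`. Since `Γ` is binary, a direct computation gives, for every `u` and every row `Mⱼ`,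
`u * Mⱼ = uⱼ + (M (Tr ∘ u))ⱼ`, and `Tr ∘ (aM) = a` for every binary `a`. Hence `u` lies in the
dual exactly when `u = M (Tr ∘ u)`. A codeword `aM` passes this test iff `aM = Ma`, and every
vector passing it is the codeword `(Tr ∘ u) Mᵀ`; so the code is self-dual iff `Mᵀ = M`,
i.e. iff `Γᵀ = Γ`.
-/

namespace F4

theorem pow_four (x : F4) : x ^ 4 = x := by
  simpa [← Nat.card_eq_fintype_card, GaloisField.card 2 2 two_ne_zero] using
    FiniteField.pow_card x

noncomputable def tr : F4 →+ F4 :=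
  AddMonoidHom.mk' (fun x => x + x ^ 2) fun x y => by
    simp only [CharTwo.add_sq]
    ring

theorem tr_apply (x : F4) : tr x = x + x ^ 2 := rfl

theorem tr_eq_zero_or_one (x : F4) : tr x = 0 ∨ tr x = 1 := by
  refine eq_zero_or_one_of_sq_eq_self ?_
  rw [tr_apply, CharTwo.add_sq, ← pow_mul, pow_four]
  ring

theorem tr_eq_zero_of_binary {b : F4} (hb : b = 0 ∨ b = 1) : tr b = 0 := by
  rcases hb with rfl | rfl
  · simp
  · rw [tr_apply, one_pow, CharTwo.add_self_eq_zero]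

theorem tr_mul_of_binary {b : F4} (hb : b = 0 ∨ b = 1) (x : F4) : tr (b * x) = b * tr x := by
  rcases hb with rfl | rfl <;> simp

variable {ω : F4} (hω : ω ^ 2 = ω + 1)
include hω

theorem tr_omega : tr ω = 1 := by
  rw [tr_apply, hω]
  linear_combination ω * CharTwo.two_eq_zero (R := F4)

theorem tr_mul_omega_sq (x : F4) : tr (x * ω ^ 2) = x + ω * tr x := by
  have hω4 : ω ^ 4 = ω := pow_four ω
  rw [tr_apply, tr_apply]
  linear_combination x ^ 2 * hω4 + x * hω

theorem tr_mul_sq_add_mul_omega {g d : F4} (hg : g = 0 ∨ g = 1) (hd : d = 0 ∨ d = 1) (x : F4) :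
    tr (x * (g + d * ω) ^ 2) = d * x + (g + d * ω) * tr x := by
  have hsq : (g + d * ω) ^ 2 = g + d * ω ^ 2 := by
    rcases hg with rfl | rfl <;> rcases hd with rfl | rfl <;> simp [CharTwo.add_sq]
  rw [hsq, show x * (g + d * ω ^ 2) = g * x + d * (x * ω ^ 2) by ring, map_add,
    tr_mul_of_binary hg, tr_mul_of_binary hd, tr_mul_omega_sq hω]
  ring

end F4

open F4 Matrix

theorem trip_eq_sum_tr {ι : Type} [Fintype ι] (u v : ι → F4) :
    trip u v = ∑ i, tr (u i * v i ^ 2) := by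
  refine Finset.sum_congr rfl fun i _ => ?_
  rw [tr_apply, mul_pow, ← pow_mul, pow_four]

theorem Pi.single_one_apply_eq_zero_or_one {ι R : Type*} [DecidableEq ι] [Zero R] [One R]
    (j i : ι) : (Pi.single j 1 : ι → R) i = 0 ∨ (Pi.single j 1 : ι → R) i = 1 := by
  rcases eq_or_ne i j with rfl | h
  · simp
  · simp [h]

theorem Matrix.one_apply_eq_zero_or_one {ι R : Type*} [DecidableEq ι] [Zero R] [One R]
    (i j : ι) : (1 : Matrix ι ι R) i j = 0 ∨ (1 : Matrix ι ι R) i j = 1 := by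
  rw [one_apply]
  split_ifs <;> simp

theorem Matrix.add_smul_one_apply {ι R : Type*} [DecidableEq ι] [CommSemiring R]
    (A : Matrix ι ι R) (c : R) (i j : ι) :
    (A + c • 1) i j = A i j + (1 : Matrix ι ι R) i j * c := by
  simp [mul_comm]

section Code

variable {ι : Type} [Fintype ι]

def binaryCode (M : Matrix ι ι F4) : Set (ι → F4) :=
  {x | ∃ a : ι → F4, (∀ i, a i = 0 ∨ a i = 1) ∧ x = a ᵥ* M}

def tripDual (S : Set (ι → F4)) : Set (ι → F4) :=
  {u | ∀ c ∈ S, trip u c = 0}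

theorem trip_vecMul_right (M : Matrix ι ι F4) {b : ι → F4} (hb : ∀ i, b i = 0 ∨ b i = 1)
    (u : ι → F4) : trip u (b ᵥ* M) = ∑ j, b j * trip u (M j) := by
  simp_rw [trip_eq_sum_tr, Finset.mul_sum]
  rw [Finset.sum_comm]
  refine Finset.sum_congr rfl fun i _ => ?_
  rw [vecMul, dotProduct, CharTwo.sum_sq, Finset.mul_sum, map_sum]
  refine Finset.sum_congr rfl fun j _ => ?_
  have hbj : b j ^ 2 = b j := by rcases hb j with h | h <;> simp [h]
  rw [mul_pow, hbj, mul_left_comm, tr_mul_of_binary (hb j)]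

theorem row_mem_binaryCode [DecidableEq ι] (M : Matrix ι ι F4) (j : ι) : M j ∈ binaryCode M :=
  ⟨Pi.single j 1, Pi.single_one_apply_eq_zero_or_one j, (single_one_vecMul j M).symm⟩

theorem mem_tripDual_binaryCode_iff [DecidableEq ι] (M : Matrix ι ι F4) (u : ι → F4) :
    u ∈ tripDual (binaryCode M) ↔ ∀ j, trip u (M j) = 0 := by
  refine ⟨fun hu j => hu _ (row_mem_binaryCode M j), ?_⟩
  rintro hu _ ⟨b, hb, rfl⟩
  simp [trip_vecMul_right M hb, hu]

variable [DecidableEq ι] {Γ : Matrix ι ι F4} (hΓ : ∀ i j, Γ i j = 0 ∨ Γ i j = 1)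
  {ω : F4} (hω : ω ^ 2 = ω + 1)
include hΓ hω

theorem trip_add_smul_one_row (u : ι → F4) (j : ι) :
    trip u ((Γ + ω • 1) j) = u j + ((Γ + ω • 1) *ᵥ (tr ∘ u)) j := by
  calc trip u ((Γ + ω • 1) j)
      = ∑ i, tr (u i * (Γ j i + (1 : Matrix ι ι F4) j i * ω) ^ 2) := by
        simp only [trip_eq_sum_tr, add_smul_one_apply]
    _ = ∑ i, ((1 : Matrix ι ι F4) j i * u i + (Γ j i + (1 : Matrix ι ι F4) j i * ω) * tr (u i)) :=
        Finset.sum_congr rfl fun i _ =>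
          tr_mul_sq_add_mul_omega hω (hΓ j i) (one_apply_eq_zero_or_one j i) (u i)
    _ = ((1 : Matrix ι ι F4) *ᵥ u) j + ((Γ + ω • 1) *ᵥ (tr ∘ u)) j := by
        simp only [Finset.sum_add_distrib, mulVec, dotProduct, add_smul_one_apply,
          Function.comp_apply]
    _ = u j + ((Γ + ω • 1) *ᵥ (tr ∘ u)) j := by rw [one_mulVec]

theorem tr_comp_vecMul_add_smul_one {a : ι → F4} (ha : ∀ i, a i = 0 ∨ a i = 1) :
    tr ∘ (a ᵥ* (Γ + ω • 1)) = a := by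
  have htr : ∀ i k, tr ((Γ + ω • 1) i k) = (1 : Matrix ι ι F4) i k := fun i k => by
    rw [add_smul_one_apply, map_add, tr_eq_zero_of_binary (hΓ i k),
      tr_mul_of_binary (one_apply_eq_zero_or_one i k), tr_omega hω, zero_add, mul_one]
  funext k
  calc tr ((a ᵥ* (Γ + ω • 1)) k) = (a ᵥ* (1 : Matrix ι ι F4)) k := by
        simp only [vecMul, dotProduct, map_sum, tr_mul_of_binary (ha _), htr]
    _ = a k := by rw [vecMul_one]

theorem mem_tripDual_binaryCode_add_smul_one_iff (u : ι → F4) :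
    u ∈ tripDual (binaryCode (Γ + ω • 1)) ↔ u = (Γ + ω • 1) *ᵥ (tr ∘ u) := by
  rw [mem_tripDual_binaryCode_iff, funext_iff]
  simp only [trip_add_smul_one_row hΓ hω, CharTwo.add_eq_zero]

theorem binaryCode_add_smul_one_eq_tripDual_iff :
    binaryCode (Γ + ω • 1) = tripDual (binaryCode (Γ + ω • 1)) ↔ (Γ + ω • 1)ᵀ = Γ + ω • 1 := by
  constructor
  · intro h
    ext i j
    have hrow := h ▸ row_mem_binaryCode (Γ + ω • 1) i
    have htr := tr_comp_vecMul_add_smul_one hΓ hω (Pi.single_one_apply_eq_zero_or_one i)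
    rw [single_one_vecMul, row_def] at htr
    rw [mem_tripDual_binaryCode_add_smul_one_iff hΓ hω, htr, mulVec_single_one] at hrow
    exact (congrFun hrow j).symm
  · intro hsym
    refine Set.Subset.antisymm ?_ fun u hu => ?_
    · rintro _ ⟨a, ha, rfl⟩
      rw [mem_tripDual_binaryCode_add_smul_one_iff hΓ hω, tr_comp_vecMul_add_smul_one hΓ hω ha,
        ← vecMul_transpose, hsym]
    · rw [mem_tripDual_binaryCode_add_smul_one_iff hΓ hω, ← vecMul_transpose, hsym] at hu
      exact ⟨tr ∘ u, fun i => tr_eq_zero_or_one _, hu⟩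

end Code

theorem selfdual_iff_symmetric_general {n : ℕ} (Γ : Matrix (Fin n) (Fin n) F4)
    (hbin : ∀ i j, Γ i j = 0 ∨ Γ i j = 1)
    (ω : F4) (hω : ω ^ 2 = ω + 1) (C : Matrix (Fin n) (Fin n) F4)
    (hC : C = Γ + ω • 1) :
    ({x | ∃ a : Fin n → F4, (∀ i, a i = 0 ∨ a i = 1) ∧
        x = Matrix.vecMul a C} =
      {u : Fin n → F4 |
        ∀ c ∈ {x | ∃ a : Fin n → F4, (∀ i, a i = 0 ∨ a i = 1) ∧
          x = Matrix.vecMul a C}, trip u c = 0}) ↔ Γ.transpose = Γ := by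
  subst hC
  change binaryCode (Γ + ω • 1) = tripDual (binaryCode (Γ + ω • 1)) ↔ _
  rw [binaryCode_add_smul_one_eq_tripDual_iff hbin hω, transpose_add, transpose_smul, transpose_one,
    add_left_inj]

theorem selfdual_iff_symmetric {n : ℕ} (Γ : Matrix (Fin n) (Fin n) F4)
    (hbin : ∀ i j, Γ i j = 0 ∨ Γ i j = 1) (hdiag : ∀ i, Γ i i = 0)
    (ω : F4) (hω : ω ^ 2 = ω + 1) (C : Matrix (Fin n) (Fin n) F4)
    (hC : C = Γ + ω • 1) :
    ({x | ∃ a : Fin n → F4, (∀ i, a i = 0 ∨ a i = 1) ∧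
        x = Matrix.vecMul a C} =
      {u : Fin n → F4 |
        ∀ c ∈ {x | ∃ a : Fin n → F4, (∀ i, a i = 0 ∨ a i = 1) ∧
          x = Matrix.vecMul a C}, trip u c = 0}) ↔ Γ.transpose = Γ :=
  selfdual_iff_symmetric_general Γ hbin ω hω C hC
end
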